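/- The quadratic entropy satisfies pure-state Holevo data processing: for every quantum channel 𝓔 given by Kraus operators, all probability weights p_j (p_j ≥ 0, ∑_j p_j = 1) and all unit vectors ψ_j ∈ ℂ^n (j ∈ Fin k), S_Q(∑_j p_j 𝓔(ψ_jψ_jᴴ)) − ∑_j p_j S_Q(𝓔(ψ_jψ_jᴴ)) ≤ S_Q(∑_j p_j ψ_jψ_jᴴ) − ∑_j p_j S_Q(ψ_jψ_jᴴ). -/

import Mathlib

open scoped Kronecker
open Finset Matrix
open scoped ComplexOrder

noncomputable section

/-- A density matrix: positive semidefinite with unit trace. -/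
def IsDensity {d : Type} [Fintype d] [DecidableEq d] (ρ : Matrix d d ℂ) : Prop :=
  ρ.PosSemidef ∧ ρ.trace = 1

/-- An entropy family: a real number assigned to every square complex matrix of
every finite dimension. -/
def EntropyFamily : Type 1 :=
  ∀ (d : Type) [Fintype d] [DecidableEq d], Matrix d d ℂ → ℝ

/-- Concavity of an entropy family. -/
def EntropyFamily.Concave (S : EntropyFamily) : Prop :=
  ∀ (d : Type) [Fintype d] [DecidableEq d] (k : ℕ) (p : Fin k → ℝ)
    (ρ : Fin k → Matrix d d ℂ),
    (∀ j, 0 ≤ p j) → ∑ j, p j = 1 → (∀ j, IsDensity (ρ j)) →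
    ∑ j, p j * S d (ρ j) ≤ S d (∑ j, (p j : ℂ) • ρ j)

/-- The entropy family depends only on the nonzero spectrum: `S (A Aᴴ) = S (Aᴴ A)`. -/
def EntropyFamily.SpectrumDep (S : EntropyFamily) : Prop :=
  ∀ (d e : Type) [Fintype d] [DecidableEq d] [Fintype e] [DecidableEq e]
    (A : Matrix d e ℂ), S d (A * Aᴴ) = S e (Aᴴ * A)

/-- Partial trace over the first tensor factor. -/
def trA {da db : Type} [Fintype da] (ρ : Matrix (da × db) (da × db) ℂ) :
    Matrix db db ℂ :=
  Matrix.of fun j j' => ∑ i, ρ (i, j) (i, j')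

/-- Partial trace over the second tensor factor. -/
def trB {da db : Type} [Fintype db] (ρ : Matrix (da × db) (da × db) ℂ) :
    Matrix da da ℂ :=
  Matrix.of fun i i' => ∑ j, ρ (i, j) (i', j)

/-- A POVM: a finite family of positive semidefinite matrices summing to `1`. -/
def IsPOVM {d : Type} [Fintype d] [DecidableEq d] {k : ℕ}
    (P : Fin k → Matrix d d ℂ) : Prop :=
  (∀ j, (P j).PosSemidef) ∧ ∑ j, P j = 1

/-- Probability of POVM outcome `P` on the first factor: `Tr((P ⊗ I) ρ)`. -/
def prob {da db : Type} [Fintype da] [Fintype db] [DecidableEq da] [DecidableEq db]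
    (P : Matrix da da ℂ) (ρ : Matrix (da × db) (da × db) ℂ) : ℝ :=
  (((P ⊗ₖ (1 : Matrix db db ℂ)) * ρ).trace).re

/-- Conditional state on the second factor given POVM outcome `P`. -/
def condB {da db : Type} [Fintype da] [Fintype db] [DecidableEq da] [DecidableEq db]
    (P : Matrix da da ℂ) (ρ : Matrix (da × db) (da × db) ℂ) : Matrix db db ℂ :=
  (((prob P ρ)⁻¹ : ℝ) : ℂ) • trA ((P ⊗ₖ (1 : Matrix db db ℂ)) * ρ)

/-- The Holevo quantity `χ(P, b)`. -/
def holevoB (S : EntropyFamily) {da db : Type} [Fintype da] [DecidableEq da]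
    [Fintype db] [DecidableEq db] {k : ℕ} (P : Fin k → Matrix da da ℂ)
    (ρ : Matrix (da × db) (da × db) ℂ) : ℝ :=
  S db (trA ρ) -
    ∑ j ∈ univ.filter (fun j => prob (P j) ρ ≠ 0),
      prob (P j) ρ * S db (condB (P j) ρ)

/-- Eigenvalues of a Hermitian matrix (junk value `0` if not Hermitian). -/
def eigs {d : Type} [Fintype d] [DecidableEq d] (X : Matrix d d ℂ) : d → ℝ :=
  if h : X.IsHermitian then h.eigenvalues else 0

/-- von Neumann entropy `S(ρ) = ∑ᵢ (−λᵢ log λᵢ)`. -/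
def vN {d : Type} [Fintype d] [DecidableEq d] (ρ : Matrix d d ℂ) : ℝ :=
  ∑ i, Real.negMulLog (eigs ρ i)

/-- von Neumann entropy as an entropy family. -/
def vNF : EntropyFamily := fun d _ _ ρ => vN ρ

/-- Quadratic entropy `S_Q(ρ) = 1 − Re Tr(ρ²)`. -/
def SQ {d : Type} [Fintype d] (ρ : Matrix d d ℂ) : ℝ := 1 - ((ρ * ρ).trace).re

/-- Quadratic entropy as an entropy family. -/
def SQF : EntropyFamily := fun d _ _ ρ => SQ ρ

/-- The outer product `ψ ψᴴ`. -/
def outer {d : Type} (ψ : d → ℂ) : Matrix d d ℂ := Matrix.vecMulVec ψ (star ψ)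

/-- A unit vector. -/
def UnitVec {d : Type} [Fintype d] (ψ : d → ℂ) : Prop := ∑ i, ‖ψ i‖ ^ 2 = 1

/-- Kraus operators of a quantum channel: `∑ᵢ Kᵢᴴ Kᵢ = 1`. -/
def IsKraus {n r t : ℕ} (K : Fin t → Matrix (Fin r) (Fin n) ℂ) : Prop :=
  ∑ i, (K i)ᴴ * K i = 1

/-- Action of the quantum channel with Kraus operators `K`. -/
def channel {n r t : ℕ} (K : Fin t → Matrix (Fin r) (Fin n) ℂ)
    (ρ : Matrix (Fin n) (Fin n) ℂ) : Matrix (Fin r) (Fin r) ℂ :=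
  ∑ i, K i * ρ * (K i)ᴴ

/-- Conditional joint state after a POVM element with square root `Q` and
outcome probability `p`: `(1/p) (Q ⊗ I) ρ (Q ⊗ I)`. -/
def condJoint {da db : Type} [Fintype da] [Fintype db] [DecidableEq da]
    [DecidableEq db] (Q : Matrix da da ℂ) (p : ℝ)
    (ρ : Matrix (da × db) (da × db) ℂ) : Matrix (da × db) (da × db) ℂ :=
  ((p⁻¹ : ℝ) : ℂ) • ((Q ⊗ₖ (1 : Matrix db db ℂ)) * ρ * (Q ⊗ₖ (1 : Matrix db db ℂ)))

/-- Tsallis entropy with parameter `q`. -/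
def tsallis (q : ℝ) {d : Type} [Fintype d] [DecidableEq d]
    (ρ : Matrix d d ℂ) : ℝ :=
  ((∑ i, eigs ρ i ^ q) - 1) / (1 - q)

/-- Rényi entropy with parameter `q`. -/
def renyi (q : ℝ) {d : Type} [Fintype d] [DecidableEq d]
    (ρ : Matrix d d ℂ) : ℝ :=
  (1 / (1 - q)) * Real.log (∑ i, eigs ρ i ^ q)

section AuxQPDP

variable {d : Type} [Fintype d] [DecidableEq d]


variable {d : Type} [Fintype d] [DecidableEq d]

lemma outer_apply (a : d → ℂ) (x y : d) : outer a x y = a x * (starRingEnd ℂ) (a y) := rfl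

lemma trace_outer_mul_outer (a b : d → ℂ) :
    (outer a * outer b).trace = (star a ⬝ᵥ b) * (star b ⬝ᵥ a) := by
  simp only [Matrix.trace, Matrix.diag, Matrix.mul_apply, outer_apply, dotProduct,
    Pi.star_apply, Finset.sum_mul, Finset.mul_sum]
  congr 1; ext z; congr 1; ext x; simp only [Complex.star_def]; ring

lemma star_dot_comm (a b : d → ℂ) : star b ⬝ᵥ a = (starRingEnd ℂ) (star a ⬝ᵥ b) := by
  simp [dotProduct, Complex.star_def, mul_comm]

lemma re_trace_outer_mul_outer (a b : d → ℂ) :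
    ((outer a * outer b).trace).re = Complex.normSq (star a ⬝ᵥ b) := by
  rw [trace_outer_mul_outer, star_dot_comm a b, Complex.mul_conj]
  simp

lemma star_dot_self (a : d → ℂ) : star a ⬝ᵥ a = ((∑ i, Complex.normSq (a i) : ℝ) : ℂ) := by
  simp [dotProduct, Complex.star_def, ← Complex.normSq_eq_conj_mul_self]

lemma cs_bound (a b : d → ℂ) :
    Complex.normSq (star a ⬝ᵥ b) ≤ (∑ i, Complex.normSq (a i)) * (∑ i, Complex.normSq (b i)) := by
  have h := norm_inner_le_norm (𝕜 := ℂ)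
      ((WithLp.equiv 2 (d → ℂ)).symm a) ((WithLp.equiv 2 (d → ℂ)).symm b)
  have hi : inner ℂ ((WithLp.equiv 2 (d → ℂ)).symm a) ((WithLp.equiv 2 (d → ℂ)).symm b)
      = star a ⬝ᵥ b := by rw [dotProduct_comm]; rfl
  rw [hi] at h
  have h2 := mul_le_mul h h (norm_nonneg _) (mul_nonneg (norm_nonneg _) (norm_nonneg _))
  rw [← Complex.sq_norm] at *
  calc ‖star a ⬝ᵥ b‖ ^ 2 = ‖star a ⬝ᵥ b‖*‖star a ⬝ᵥ b‖ := by
        rw [sq]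
    _ ≤ (‖(WithLp.equiv 2 (d → ℂ)).symm a‖ * ‖(WithLp.equiv 2 (d → ℂ)).symm b‖) *
        (‖(WithLp.equiv 2 (d → ℂ)).symm a‖ * ‖(WithLp.equiv 2 (d → ℂ)).symm b‖) := h2
    _ = (∑ i, Complex.normSq (a i)) * (∑ i, Complex.normSq (b i)) := by
        rw [EuclideanSpace.norm_eq, EuclideanSpace.norm_eq]
        have ha : (0:ℝ) ≤ ∑ i, ‖a i‖ ^ 2 := by positivity
        have hb : (0:ℝ) ≤ ∑ i, ‖b i‖ ^ 2 := by positivity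
        calc (Real.sqrt (∑ i, ‖a i‖ ^ 2) * Real.sqrt (∑ i, ‖b i‖ ^ 2)) *
              (Real.sqrt (∑ i, ‖a i‖ ^ 2) * Real.sqrt (∑ i, ‖b i‖ ^ 2))
            = (Real.sqrt (∑ i, ‖a i‖ ^ 2) * Real.sqrt (∑ i, ‖a i‖ ^ 2)) *
              (Real.sqrt (∑ i, ‖b i‖ ^ 2) * Real.sqrt (∑ i, ‖b i‖ ^ 2)) := by ring
          _ = (∑ i, ‖a i‖ ^ 2) * (∑ i, ‖b i‖ ^ 2) := by
              rw [Real.mul_self_sqrt ha, Real.mul_self_sqrt hb]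
          _ = (∑ i, Complex.normSq (a i)) * (∑ i, Complex.normSq (b i)) := by
              simp [Complex.sq_norm]

variable {n r t : ℕ} (K : Fin t → Matrix (Fin r) (Fin n) ℂ)

lemma channel_outer (x : Fin n → ℂ) :
    channel K (outer x) = ∑ i, outer ((K i).mulVec x) := by
  unfold channel
  refine Finset.sum_congr rfl fun i _ => ?_
  ext a b
  simp only [Matrix.mul_apply, outer_apply, Matrix.mulVec, dotProduct,
    conjTranspose_apply, Complex.star_def, Finset.sum_mul, Finset.mul_sum, map_sum,
    _root_.map_mul]
  congr 1; ext p; congr 1; ext q; ring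

lemma channel_sub (A B : Matrix (Fin n) (Fin n) ℂ) :
    channel K (A - B) = channel K A - channel K B := by
  unfold channel
  rw [← Finset.sum_sub_distrib]
  congr 1; ext i
  rw [Matrix.mul_sub, Matrix.sub_mul]

lemma channel_smul (c : ℂ) (A : Matrix (Fin n) (Fin n) ℂ) :
    channel K (c • A) = c • channel K A := by
  unfold channel
  rw [Finset.smul_sum]
  congr 1; ext i
  rw [Matrix.mul_smul, Matrix.smul_mul]

lemma kraus_norm (hK : IsKraus K) (x : Fin n → ℂ) :
    ∑ i, ∑ k, Complex.normSq ((K i).mulVec x k) = ∑ k, Complex.normSq (x k) := by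
  have h : ∀ i, ((∑ k, Complex.normSq ((K i).mulVec x k) : ℝ) : ℂ)
      = star x ⬝ᵥ ((K i)ᴴ * K i).mulVec x := by
    intro i
    rw [← star_dot_self ((K i).mulVec x)]
    rw [Matrix.star_mulVec, ← Matrix.dotProduct_mulVec, Matrix.mulVec_mulVec]
  have h2 : ((∑ i, ∑ k, Complex.normSq ((K i).mulVec x k) : ℝ) : ℂ)
      = ((∑ k, Complex.normSq (x k) : ℝ) : ℂ) := by
    rw [Complex.ofReal_sum]
    calc ∑ i, ((∑ k, Complex.normSq ((K i).mulVec x k) : ℝ) : ℂ)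
        = ∑ i, star x ⬝ᵥ ((K i)ᴴ * K i).mulVec x := by
          exact Finset.sum_congr rfl fun i _ => h i
      _ = star x ⬝ᵥ (∑ i, (K i)ᴴ * K i).mulVec x := by
          simp only [Matrix.mulVec, dotProduct, Matrix.sum_apply, Finset.sum_mul,
            Finset.mul_sum]
          rw [Finset.sum_comm]
          congr 1; ext a
          rw [Finset.sum_comm]
      _ = star x ⬝ᵥ x := by rw [hK, Matrix.one_mulVec]
      _ = ((∑ k, Complex.normSq (x k) : ℝ) : ℂ) := star_dot_self x
  exact_mod_cast h2

lemma dot_comb (a b : d → ℂ) (c1 c2 c3 c4 : ℂ) :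
    star (fun i => c1 * a i + c2 * b i) ⬝ᵥ (fun i => c3 * a i + c4 * b i)
      = (starRingEnd ℂ) c1 * c3 * (star a ⬝ᵥ a) + (starRingEnd ℂ) c1 * c4 * (star a ⬝ᵥ b)
        + (starRingEnd ℂ) c2 * c3 * (star b ⬝ᵥ a) + (starRingEnd ℂ) c2 * c4 * (star b ⬝ᵥ b) := by
  simp only [dotProduct, Pi.star_apply, Complex.star_def, Finset.mul_sum]
  rw [← Finset.sum_add_distrib, ← Finset.sum_add_distrib, ← Finset.sum_add_distrib]
  refine Finset.sum_congr rfl fun i _ => ?_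
  simp only [map_add, _root_.map_mul]
  ring

set_option maxHeartbeats 2000000 in
lemma decomp (ψ φ : d → ℂ) (hψ : ∑ i, Complex.normSq (ψ i) = 1)
    (hφ : ∑ i, Complex.normSq (φ i) = 1)
    (hg : 0 < 1 - Complex.normSq (star ψ ⬝ᵥ φ)) :
    ∃ u v : d → ℂ, (∑ i, Complex.normSq (u i)) = 1 ∧ (∑ i, Complex.normSq (v i)) = 1 ∧
      outer ψ - outer φ =
        ((Real.sqrt (1 - Complex.normSq (star ψ ⬝ᵥ φ)) : ℝ) : ℂ) • (outer u - outer v) := by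
  set f : ℂ := star ψ ⬝ᵥ φ with hf
  set g : ℝ := Real.sqrt (1 - Complex.normSq f) with hgdef
  have gpos : 0 < g := Real.sqrt_pos.mpr hg
  have hg2 : (g : ℝ)^2 = 1 - Complex.normSq f := Real.sq_sqrt hg.le
  set N : ℝ := Real.sqrt (2 * (1 + g)) with hNdef
  have Npos : 0 < N := Real.sqrt_pos.mpr (by linarith)
  have hN2 : (N : ℝ)^2 = 2 * (1 + g) := Real.sq_sqrt (by linarith)
  -- complex versions
  have gne : ((g:ℂ)) ≠ 0 := by exact_mod_cast gpos.ne'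
  have Nne : ((N:ℂ)) ≠ 0 := by exact_mod_cast Npos.ne'
  have hg2c : ((g:ℂ))^2 = 1 - f * (starRingEnd ℂ) f := by
    have : ((Complex.normSq f : ℝ) : ℂ) = f * (starRingEnd ℂ) f := (Complex.mul_conj f).symm
    calc ((g:ℂ))^2 = (((g^2 : ℝ)) : ℂ) := by push_cast; ring
      _ = ((1 - Complex.normSq f : ℝ) : ℂ) := by rw [hg2]
      _ = 1 - f * (starRingEnd ℂ) f := by push_cast [← this]; ring
  have hN2c : ((N:ℂ))^2 = 2 * (1 + (g:ℂ)) := by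
    calc ((N:ℂ))^2 = (((N^2 : ℝ)) : ℂ) := by push_cast; ring
      _ = 2 * (1 + (g:ℂ)) := by rw [hN2]; push_cast; ring
  set w : d → ℂ := fun i => φ i - f * ψ i with hw
  have hψc : star ψ ⬝ᵥ ψ = 1 := by rw [star_dot_self, hψ]; norm_num
  have hφc : star φ ⬝ᵥ φ = 1 := by rw [star_dot_self, hφ]; norm_num
  have hψw : star ψ ⬝ᵥ w = 0 := by
    simp only [hw, dotProduct, Pi.star_apply]
    have : ∑ i, star (ψ i) * (φ i - f * ψ i)
        = (star ψ ⬝ᵥ φ) - f * (star ψ ⬝ᵥ ψ) := by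
      simp only [dotProduct, Pi.star_apply, Finset.mul_sum, ← Finset.sum_sub_distrib]
      refine Finset.sum_congr rfl fun i _ => by ring
    rw [this, hψc, ← hf]; ring
  have hwψ : star w ⬝ᵥ ψ = 0 := by rw [star_dot_comm, hψw]; simp
  have hφw : star φ ⬝ᵥ w = 1 - f * (starRingEnd ℂ) f := by
    have : star φ ⬝ᵥ w = (star φ ⬝ᵥ φ) - f * (star φ ⬝ᵥ ψ) := by
      simp only [hw, dotProduct, Pi.star_apply, Finset.mul_sum, ← Finset.sum_sub_distrib]
      refine Finset.sum_congr rfl fun i _ => by ring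
    rw [this, hφc, star_dot_comm ψ φ, ← hf]
  have hww : star w ⬝ᵥ w = 1 - f * (starRingEnd ℂ) f := by
    have : star w ⬝ᵥ w = (star φ ⬝ᵥ w) - (starRingEnd ℂ) f * (star ψ ⬝ᵥ w) := by
      simp only [hw, dotProduct, Pi.star_apply, Finset.mul_sum, ← Finset.sum_sub_distrib]
      refine Finset.sum_congr rfl fun i _ => by
        simp only [Complex.star_def, map_sub, _root_.map_mul]; ring
    rw [this, hφw, hψw]; ring
  -- the unit vectors
  set c1 : ℂ := (N:ℂ)⁻¹ * ((1:ℂ) + (g:ℂ)) with hc1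
  set c2 : ℂ := -((N:ℂ)⁻¹ * ((starRingEnd ℂ) f / (g:ℂ))) with hc2
  set d1 : ℂ := (N:ℂ)⁻¹ * f with hd1
  set d2 : ℂ := (N:ℂ)⁻¹ * (((1:ℂ) + (g:ℂ)) / (g:ℂ)) with hd2
  refine ⟨fun i => c1 * ψ i + c2 * w i, fun i => d1 * ψ i + d2 * w i, ?_, ?_, ?_⟩
  · have hdot : star (fun i => c1 * ψ i + c2 * w i) ⬝ᵥ (fun i => c1 * ψ i + c2 * w i) = 1 := by
      rw [dot_comb, hψc, hψw, hwψ, hww]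
      rw [hc1, hc2]
      simp only [map_mul, map_inv₀, map_div₀, map_add, map_neg, map_one, Complex.conj_ofReal, Complex.conj_conj]
      field_simp
      grind
    have := star_dot_self (fun i => c1 * ψ i + c2 * w i)
    rw [hdot] at this
    exact_mod_cast this.symm
  · have hdot : star (fun i => d1 * ψ i + d2 * w i) ⬝ᵥ (fun i => d1 * ψ i + d2 * w i) = 1 := by
      rw [dot_comb, hψc, hψw, hwψ, hww]
      rw [hd1, hd2]
      simp only [map_mul, map_inv₀, map_div₀, map_add, map_neg, map_one, Complex.conj_ofReal, Complex.conj_conj]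
      field_simp
      grind
    have := star_dot_self (fun i => d1 * ψ i + d2 * w i)
    rw [hdot] at this
    exact_mod_cast this.symm
  · ext x y
    simp only [Matrix.sub_apply, Matrix.smul_apply, outer_apply, smul_eq_mul]
    have hφx : φ x = f * ψ x + w x := by simp [hw]
    have hφy : φ y = f * ψ y + w y := by simp [hw]
    rw [hφx, hφy]
    simp only [hc1, hc2, hd1, hd2, map_add, _root_.map_mul, map_sub, map_neg, map_inv₀,
      map_div₀, _root_.map_one, Complex.conj_ofReal, Complex.conj_conj]
    field_simp
    grind

lemma sum_normSq_w (ψ φ : d → ℂ) (hψ : ∑ i, Complex.normSq (ψ i) = 1)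
    (hφ : ∑ i, Complex.normSq (φ i) = 1) :
    ((∑ i, Complex.normSq (φ i - (star ψ ⬝ᵥ φ) * ψ i) : ℝ) : ℂ)
      = 1 - (star ψ ⬝ᵥ φ) * (starRingEnd ℂ) (star ψ ⬝ᵥ φ) := by
  set f : ℂ := star ψ ⬝ᵥ φ with hf
  set w : d → ℂ := fun i => φ i - f * ψ i with hw
  have hψc : star ψ ⬝ᵥ ψ = 1 := by rw [star_dot_self, hψ]; norm_num
  have hφc : star φ ⬝ᵥ φ = 1 := by rw [star_dot_self, hφ]; norm_num
  have hψw : star ψ ⬝ᵥ w = 0 := by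
    have : star ψ ⬝ᵥ w = (star ψ ⬝ᵥ φ) - f * (star ψ ⬝ᵥ ψ) := by
      simp only [hw, dotProduct, Pi.star_apply, Finset.mul_sum, ← Finset.sum_sub_distrib]
      refine Finset.sum_congr rfl fun i _ => by ring
    rw [this, hψc, ← hf]; ring
  have hφw : star φ ⬝ᵥ w = 1 - f * (starRingEnd ℂ) f := by
    have : star φ ⬝ᵥ w = (star φ ⬝ᵥ φ) - f * (star φ ⬝ᵥ ψ) := by
      simp only [hw, dotProduct, Pi.star_apply, Finset.mul_sum, ← Finset.sum_sub_distrib]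
      refine Finset.sum_congr rfl fun i _ => by ring
    rw [this, hφc, star_dot_comm ψ φ, ← hf]
  have hww : star w ⬝ᵥ w = 1 - f * (starRingEnd ℂ) f := by
    have : star w ⬝ᵥ w = (star φ ⬝ᵥ w) - (starRingEnd ℂ) f * (star ψ ⬝ᵥ w) := by
      simp only [hw, dotProduct, Pi.star_apply, Finset.mul_sum, ← Finset.sum_sub_distrib]
      refine Finset.sum_congr rfl fun i _ => by
        simp only [Complex.star_def, map_sub, _root_.map_mul]; ring
    rw [this, hφw, hψw]; ring
  rw [← hww, star_dot_self w]

lemma normSq_dot_le_one (ψ φ : d → ℂ) (hψ : ∑ i, Complex.normSq (ψ i) = 1)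
    (hφ : ∑ i, Complex.normSq (φ i) = 1) :
    Complex.normSq (star ψ ⬝ᵥ φ) ≤ 1 := by
  have h := sum_normSq_w ψ φ hψ hφ
  rw [Complex.mul_conj] at h
  have h2 : (∑ i, Complex.normSq (φ i - (star ψ ⬝ᵥ φ) * ψ i) : ℝ)
      = 1 - Complex.normSq (star ψ ⬝ᵥ φ) := by exact_mod_cast h
  have h3 : (0:ℝ) ≤ ∑ i, Complex.normSq (φ i - (star ψ ⬝ᵥ φ) * ψ i) :=
    Finset.sum_nonneg fun i _ => Complex.normSq_nonneg _
  linarith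

lemma outer_eq_of_normSq_dot_eq_one (ψ φ : d → ℂ) (hψ : ∑ i, Complex.normSq (ψ i) = 1)
    (hφ : ∑ i, Complex.normSq (φ i) = 1)
    (h1 : Complex.normSq (star ψ ⬝ᵥ φ) = 1) : outer ψ = outer φ := by
  set f : ℂ := star ψ ⬝ᵥ φ with hf
  have h := sum_normSq_w ψ φ hψ hφ
  rw [Complex.mul_conj, ← hf] at h
  have h2 : (∑ i, Complex.normSq (φ i - f * ψ i) : ℝ) = 1 - Complex.normSq f := by
    exact_mod_cast h
  rw [h1] at h2
  have h3 : ∀ i, φ i = f * ψ i := by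
    intro i
    have := Finset.sum_eq_zero_iff_of_nonneg
      (fun i _ => Complex.normSq_nonneg (φ i - f * ψ i)) |>.mp (by linarith) i (Finset.mem_univ i)
    have := Complex.normSq_eq_zero.mp this
    linear_combination this
  ext x y
  simp only [outer_apply, h3, _root_.map_mul]
  have : f * (starRingEnd ℂ) f = 1 := by
    rw [Complex.mul_conj, h1]; norm_num
  linear_combination (-(ψ x * (starRingEnd ℂ) (ψ y))) * this

lemma trace_sub_sq_re (A B : Matrix d d ℂ) :
    (((A - B) * (A - B)).trace).re
      = ((A*A).trace).re - ((A*B).trace).re - ((B*A).trace).re + ((B*B).trace).re := by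
  rw [sub_mul, mul_sub, mul_sub, Matrix.trace_sub, Matrix.trace_sub, Matrix.trace_sub]
  simp [Complex.sub_re]
  ring

lemma trace_sum_outer_mul {t : ℕ} (a b : Fin t → d → ℂ) :
    (((∑ i, outer (a i)) * (∑ i, outer (b i))).trace).re
      = ∑ i, ∑ j, Complex.normSq (star (a i) ⬝ᵥ b j) := by
  rw [Matrix.sum_mul]
  simp_rw [Matrix.mul_sum]
  rw [Matrix.trace_sum]
  simp_rw [Matrix.trace_sum]
  rw [Complex.re_sum]
  refine Finset.sum_congr rfl fun i _ => ?_
  rw [Complex.re_sum]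
  exact Finset.sum_congr rfl fun j _ => re_trace_outer_mul_outer (a i) (b j)

lemma pairwise_bound {n r t : ℕ} (K : Fin t → Matrix (Fin r) (Fin n) ℂ) (hK : IsKraus K)
    (ψ φ : Fin n → ℂ) (hψ : ∑ i, Complex.normSq (ψ i) = 1)
    (hφ : ∑ i, Complex.normSq (φ i) = 1) :
    (((channel K (outer ψ) - channel K (outer φ)) *
        (channel K (outer ψ) - channel K (outer φ))).trace).re
      ≤ (((outer ψ - outer φ) * (outer ψ - outer φ)).trace).re := by
  set f : ℂ := star ψ ⬝ᵥ φ with hf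
  have hψc : star ψ ⬝ᵥ ψ = 1 := by rw [star_dot_self, hψ]; norm_num
  have hφc : star φ ⬝ᵥ φ = 1 := by rw [star_dot_self, hφ]; norm_num
  have hRHS : (((outer ψ - outer φ) * (outer ψ - outer φ)).trace).re
      = 2 - 2 * Complex.normSq f := by
    rw [trace_sub_sq_re, re_trace_outer_mul_outer, re_trace_outer_mul_outer,
      re_trace_outer_mul_outer, re_trace_outer_mul_outer, hψc, hφc,
      star_dot_comm ψ φ, ← hf]
    simp [Complex.normSq_conj]
    ring
  have hle := normSq_dot_le_one ψ φ hψ hφ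
  rw [← hf] at hle
  rcases lt_or_eq_of_le hle with hlt | heq
  · obtain ⟨u, v, hu, hv, hΔ⟩ := decomp ψ φ hψ hφ (by rw [← hf]; linarith)
    rw [← hf] at hΔ
    set g : ℝ := Real.sqrt (1 - Complex.normSq f) with hgdef
    have hg2 : g^2 = 1 - Complex.normSq f := Real.sq_sqrt (by linarith)
    have hgnn : 0 ≤ g := Real.sqrt_nonneg _
    have hchan : channel K (outer ψ) - channel K (outer φ)
        = ((g:ℝ):ℂ) • (channel K (outer u) - channel K (outer v)) := by
      rw [← channel_sub, hΔ, channel_smul, channel_sub]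
    rw [hchan]
    have hsmul : ((((g:ℝ):ℂ) • (channel K (outer u) - channel K (outer v))) *
        (((g:ℝ):ℂ) • (channel K (outer u) - channel K (outer v))))
        = (((g^2 : ℝ)):ℂ) • ((channel K (outer u) - channel K (outer v)) *
            (channel K (outer u) - channel K (outer v))) := by
      rw [Matrix.smul_mul, Matrix.mul_smul, smul_smul]
      push_cast
      ring_nf
    rw [hsmul, Matrix.trace_smul, smul_eq_mul]
    have hbound : ∀ (x : Fin n → ℂ), (∑ i, Complex.normSq (x i)) = 1 →
        ∀ (y : Fin n → ℂ), (∑ i, Complex.normSq (y i)) = 1 →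
        ((channel K (outer x) * channel K (outer y)).trace).re ≤ 1 := by
      intro x hx y hy
      rw [channel_outer, channel_outer, trace_sum_outer_mul]
      calc ∑ i, ∑ j, Complex.normSq (star ((K i).mulVec x) ⬝ᵥ ((K j).mulVec y))
          ≤ ∑ i, ∑ j, (∑ k, Complex.normSq ((K i).mulVec x k)) *
              (∑ k, Complex.normSq ((K j).mulVec y k)) := by
            refine Finset.sum_le_sum fun i _ => Finset.sum_le_sum fun j _ => ?_
            exact cs_bound _ _
        _ = (∑ i, ∑ k, Complex.normSq ((K i).mulVec x k)) *
              (∑ j, ∑ k, Complex.normSq ((K j).mulVec y k)) := by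
            rw [Finset.sum_mul_sum]
        _ = 1 := by rw [kraus_norm K hK x, kraus_norm K hK y, hx, hy]; norm_num
    have hcross : ∀ (x y : Fin n → ℂ),
        (0:ℝ) ≤ ((channel K (outer x) * channel K (outer y)).trace).re := by
      intro x y
      rw [channel_outer, channel_outer, trace_sum_outer_mul]
      exact Finset.sum_nonneg fun i _ => Finset.sum_nonneg fun j _ => Complex.normSq_nonneg _
    have hZ : (((channel K (outer u) - channel K (outer v)) *
        (channel K (outer u) - channel K (outer v))).trace).re ≤ 2 := by
      rw [trace_sub_sq_re]
      have h1 := hbound u hu u hu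
      have h2 := hbound v hv v hv
      have h3 := hcross u v
      have h4 := hcross v u
      linarith
    rw [hRHS]
    have hre : (((g ^ 2 : ℝ)) : ℂ).re = g^2 := by
      exact Complex.ofReal_re _
    have him : (((g ^ 2 : ℝ)) : ℂ).im = 0 := by
      exact Complex.ofReal_im _
    rw [Complex.mul_re, hre, him]
    have hZre := hZ
    nlinarith [sq_nonneg g]
  · rw [outer_eq_of_normSq_dot_eq_one ψ φ hψ hφ (by rw [← hf]; exact heq)]
    simp

lemma sq_identity {k : ℕ} (p : Fin k → ℝ) (hps : ∑ j, p j = 1)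
    (X : Fin k → Matrix d d ℂ) :
    SQ (∑ j, (p j : ℂ) • X j) - ∑ j, p j * SQ (X j)
      = (1/2) * ∑ j, ∑ l, p j * p l * (((X j - X l) * (X j - X l)).trace).re := by
  set T : Fin k → Fin k → ℝ := fun j l => ((X j * X l).trace).re with hTdef
  have expand : (((∑ j, (p j:ℂ) • X j) * (∑ l, (p l:ℂ) • X l)).trace).re
      = ∑ j, ∑ l, p j * p l * T j l := by
    rw [Matrix.sum_mul, Matrix.trace_sum, Complex.re_sum]
    refine Finset.sum_congr rfl fun j _ => ?_
    rw [Matrix.mul_sum, Matrix.trace_sum, Complex.re_sum]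
    refine Finset.sum_congr rfl fun l _ => ?_
    rw [Matrix.smul_mul, Matrix.mul_smul, smul_smul, Matrix.trace_smul, smul_eq_mul,
      ← Complex.ofReal_mul, Complex.re_ofReal_mul]
  have hsub : ∀ j l, (((X j - X l) * (X j - X l)).trace).re
      = T j j - T j l - T l j + T l l := fun j l => trace_sub_sq_re (X j) (X l)
  have hTsymm : ∀ j l, T l j = T j l := by
    intro j l
    simp only [hTdef]
    rw [Matrix.trace_mul_comm]
  simp only [SQ, expand, hsub]
  have h1 : ∑ j, p j * (1 - T j j) = 1 - ∑ j, p j * T j j := by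
    simp only [mul_sub, mul_one, Finset.sum_sub_distrib, hps]
  have h2 : ∑ j, ∑ l, p j * p l * T j j = ∑ j, p j * T j j := by
    calc ∑ j, ∑ l, p j * p l * T j j
        = ∑ j, p j * T j j * ∑ l, p l := Finset.sum_congr rfl fun j _ => by
          rw [Finset.mul_sum]; exact Finset.sum_congr rfl fun l _ => by ring
      _ = ∑ j, p j * T j j := by simp only [hps, mul_one]
  have h3 : ∑ j, ∑ l, p j * p l * T l l = ∑ l, p l * T l l := by
    rw [Finset.sum_comm]
    calc ∑ l, ∑ j, p j * p l * T l l
        = ∑ l, p l * T l l * ∑ j, p j := Finset.sum_congr rfl fun l _ => by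
          rw [Finset.mul_sum]; exact Finset.sum_congr rfl fun j _ => by ring
      _ = ∑ l, p l * T l l := by simp only [hps, mul_one]
  have h4 : ∑ j, ∑ l, p j * p l * T l j = ∑ j, ∑ l, p j * p l * T j l := by
    rw [Finset.sum_comm]
    refine Finset.sum_congr rfl fun j _ => Finset.sum_congr rfl fun l _ => ?_
    rw [hTsymm]
    ring
  have h5 : ∑ j, ∑ l, p j * p l * (T j j - T j l - T l j + T l l)
      = (∑ j, ∑ l, p j * p l * T j j) - (∑ j, ∑ l, p j * p l * T j l)
        - (∑ j, ∑ l, p j * p l * T l j) + (∑ j, ∑ l, p j * p l * T l l) := by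
    simp only [mul_sub, mul_add, Finset.sum_sub_distrib, Finset.sum_add_distrib]
  rw [h1, h5, h2, h3, h4]
  ring


end AuxQPDP

/-- the quadratic entropy satisfies pure-state Holevo data
processing. -/
theorem quadratic_pure_state_data_processing
    (n r t : ℕ) (K : Fin t → Matrix (Fin r) (Fin n) ℂ) (hK : IsKraus K)
    (k : ℕ) (p : Fin k → ℝ) (ψ : Fin k → Fin n → ℂ)
    (hp : ∀ j, 0 ≤ p j) (hps : ∑ j, p j = 1) (hψ : ∀ j, UnitVec (ψ j)) :
    SQ (∑ j, (p j : ℂ) • channel K (outer (ψ j))) -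
        ∑ j, p j * SQ (channel K (outer (ψ j))) ≤
      SQ (∑ j, (p j : ℂ) • outer (ψ j)) -
        ∑ j, p j * SQ (outer (ψ j)) := by
  have hnsq : ∀ j, ∑ i, Complex.normSq (ψ j i) = 1 := fun j => by
    have := hψ j
    unfold UnitVec at this
    simpa [Complex.sq_norm] using this
  rw [sq_identity p hps (fun j => channel K (outer (ψ j))),
    sq_identity p hps (fun j => outer (ψ j))]
  apply mul_le_mul_of_nonneg_left _ (by norm_num : (0:ℝ) ≤ 1/2)
  refine Finset.sum_le_sum fun j _ => Finset.sum_le_sum fun l _ => ?_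
  exact mul_le_mul_of_nonneg_left
    (pairwise_bound K hK (ψ j) (ψ l) (hnsq j) (hnsq l))
    (mul_nonneg (hp j) (hp l))
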